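/- arXiv:1109.2848 — 5 statements merged into one kernel-verified Lean document; each statement's English description precedes it below -/
import Mathlib

section
/- Let N : ℕ and let ρ : Fin N → ℂ with ρ ≠ 0. The following are equivalent: (i) ξ(ρ) = 1; (ii) ρ_I = ζ(ρ)·conj(ρ_I) for every I; (iii) ρ is a complex multiple of a real vector, i.e. there exist c ∈ ℂ and x : Fin N → ℝ with ρ_I = c·x_I for all I. (Toy-model form of Proposition 1, item (xoneifreal), including the observation that 'real' vectors saturate ξ = 1.) -/
noncomputable section

open scoped BigOperators

namespace PureSpinorToy

variable {N : ℕ}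

/-- Complex bilinear pairing `B(ρ,σ) = ∑ I, ρ_I σ_I`. -/
def B (ρ σ : Fin N → ℂ) : ℂ := ∑ I, ρ I * σ I

/-- Hermitian inner product `⟪ρ,σ⟫ = ∑ I, conj(ρ_I) σ_I`. -/
def hInner (ρ σ : Fin N → ℂ) : ℂ := ∑ I, (starRingEnd ℂ) (ρ I) * σ I

/-- Norm square `‖ρ‖² = ⟪ρ,ρ⟫` (a nonnegative real). -/
def nsq (ρ : Fin N → ℂ) : ℝ := (hInner ρ ρ).re

/-- Componentwise complex conjugation `ρ̄`. -/
def conjFun (ρ : Fin N → ℂ) : Fin N → ℂ := fun I => (starRingEnd ℂ) (ρ I)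

/-- `ζ(ρ) = B(ρ,ρ)/‖ρ‖²`. -/
def zeta (ρ : Fin N → ℂ) : ℂ := B ρ ρ / (nsq ρ : ℂ)

/-- `ξ(ρ) = |ζ(ρ)|²`. -/
def xi (ρ : Fin N → ℂ) : ℝ := Complex.normSq (zeta ρ)

/-- The family of projection maps
`P_f(ρ) = f(ξ(ρ)) • (ρ − (ζ(ρ)/(1+√(1−ξ(ρ)))) • ρ̄)`. -/
def P (f : ℝ → ℂ) (ρ : Fin N → ℂ) : Fin N → ℂ :=
  f (xi ρ) • (ρ - (zeta ρ / (1 + (Real.sqrt (1 - xi ρ) : ℂ))) • conjFun ρ)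

/-- The special function `h(t) = (1+√(1−t))/(2√(1−t))`. -/
def h (t : ℝ) : ℂ := (((1 + Real.sqrt (1 - t)) / (2 * Real.sqrt (1 - t)) : ℝ) : ℂ)

/-- The potential `Φ(ρ) = (‖ρ‖²/2)(1+√(1−ξ(ρ)))`. -/
def Phi (ρ : Fin N → ℂ) : ℝ := (nsq ρ / 2) * (1 + Real.sqrt (1 - xi ρ))

/-!
Expanding the square gives `∑ I, |ρ_I - ζ ρ̄_I|² = ‖ρ‖² (1 - ξ)`, so `ξ = 1` exactly when
`ρ = ζ ρ̄`. Then `|ζ| = 1`, and for a square root `c` of `ζ` every `c̄ ρ_I` is fixed by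
conjugation, hence real. Conversely `ξ` is invariant under `ρ ↦ c ρ`, and `B(x, x) = ‖x‖²` for
a real vector `x`.
-/

section

open ComplexConjugate

lemma nsq_eq_sum_normSq (ρ : Fin N → ℂ) : nsq ρ = ∑ I, Complex.normSq (ρ I) := by
  simp [nsq, hInner, ← Complex.normSq_eq_conj_mul_self, Complex.re_sum]

lemma nsq_pos {ρ : Fin N → ℂ} (hρ : ρ ≠ 0) : 0 < nsq ρ := by
  obtain ⟨I, hI⟩ := Function.ne_iff.mp hρ
  rw [nsq_eq_sum_normSq]
  exact Finset.sum_pos' (fun J _ => Complex.normSq_nonneg _)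
    ⟨I, Finset.mem_univ I, Complex.normSq_pos.mpr hI⟩

lemma B_smul (c : ℂ) (ρ : Fin N → ℂ) : B (c • ρ) (c • ρ) = c ^ 2 * B ρ ρ := by
  simp only [B, Pi.smul_apply, smul_eq_mul, Finset.mul_sum]
  exact Finset.sum_congr rfl fun I _ => by ring

lemma nsq_smul (c : ℂ) (ρ : Fin N → ℂ) : nsq (c • ρ) = Complex.normSq c * nsq ρ := by
  simp only [nsq_eq_sum_normSq, Pi.smul_apply, smul_eq_mul, Complex.normSq_mul, Finset.mul_sum]

lemma zeta_smul (c : ℂ) (ρ : Fin N → ℂ) :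
    zeta (c • ρ) = c ^ 2 / Complex.normSq c * zeta ρ := by
  rw [zeta, zeta, B_smul, nsq_smul]
  push_cast
  ring

lemma xi_smul {c : ℂ} (hc : c ≠ 0) (ρ : Fin N → ℂ) : xi (c • ρ) = xi ρ := by
  have hc' : Complex.normSq c ≠ 0 := (Complex.normSq_pos.mpr hc).ne'
  rw [xi, xi, zeta_smul, map_mul, map_div₀, map_pow, Complex.normSq_ofReal]
  field_simp

lemma xi_ofReal {x : Fin N → ℝ} (hx : x ≠ 0) : xi (fun I => (x I : ℂ)) = 1 := by
  have hne : (fun I => (x I : ℂ)) ≠ 0 := fun h =>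
    hx (funext fun I => Complex.ofReal_eq_zero.mp (congrFun h I))
  have hB : B (fun I => (x I : ℂ)) (fun I => (x I : ℂ)) = nsq (fun I => (x I : ℂ)) := by
    simp [B, nsq_eq_sum_normSq, Complex.normSq_ofReal]
  rw [xi, zeta, hB, div_self (by exact_mod_cast (nsq_pos hne).ne'), map_one]

lemma sum_normSq_sub_mul_conj (ρ : Fin N → ℂ) (w : ℂ) :
    ∑ I, Complex.normSq (ρ I - w * conj (ρ I)) =
      (1 + Complex.normSq w) * nsq ρ - 2 * (conj w * B ρ ρ).re := by
  rw [nsq_eq_sum_normSq, B, Finset.mul_sum, Finset.mul_sum, Complex.re_sum, Finset.mul_sum,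
    ← Finset.sum_sub_distrib]
  refine Finset.sum_congr rfl fun I _ => ?_
  rw [Complex.normSq_sub, Complex.normSq_mul, Complex.normSq_conj, map_mul, Complex.conj_conj,
    mul_left_comm (ρ I)]
  ring

lemma sum_normSq_sub_zeta_mul_conj {ρ : Fin N → ℂ} (hρ : ρ ≠ 0) :
    ∑ I, Complex.normSq (ρ I - zeta ρ * conj (ρ I)) = nsq ρ * (1 - xi ρ) := by
  have hB : B ρ ρ = zeta ρ * nsq ρ := by
    rw [zeta, div_mul_cancel₀]
    exact_mod_cast (nsq_pos hρ).ne'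
  rw [sum_normSq_sub_mul_conj, hB, ← mul_assoc, ← Complex.normSq_eq_conj_mul_self,
    ← Complex.ofReal_mul, Complex.ofReal_re, xi]
  ring

lemma xi_eq_one_iff_forall_eq_zeta_mul_conj {ρ : Fin N → ℂ} (hρ : ρ ≠ 0) :
    xi ρ = 1 ↔ ∀ I, ρ I = zeta ρ * conj (ρ I) := by
  calc
    xi ρ = 1 ↔ nsq ρ * (1 - xi ρ) = 0 := by
      rw [mul_eq_zero, or_iff_right (nsq_pos hρ).ne', sub_eq_zero, eq_comm]
    _ ↔ ∀ I ∈ Finset.univ, Complex.normSq (ρ I - zeta ρ * conj (ρ I)) = 0 := by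
      rw [← sum_normSq_sub_zeta_mul_conj hρ,
        Finset.sum_eq_zero_iff_of_nonneg fun _ _ => Complex.normSq_nonneg _]
    _ ↔ ∀ I, ρ I = zeta ρ * conj (ρ I) := by simp [sub_eq_zero]

lemma exists_real_eq_mul_of_eq_sq_mul_conj {c z : ℂ} (hc : Complex.normSq c = 1)
    (hz : z = c ^ 2 * conj z) : ∃ r : ℝ, z = c * r := by
  have hcc : conj c * c = 1 := by
    rw [← Complex.normSq_eq_conj_mul_self, hc, Complex.ofReal_one]
  have hreal : conj (conj c * z) = conj c * z := by
    calc conj (conj c * z) = (conj c * c) * (c * conj z) := by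
          rw [map_mul, Complex.conj_conj, hcc, one_mul]
      _ = conj c * z := by
          conv_rhs => rw [hz]
          ring
  refine ⟨(conj c * z).re, ?_⟩
  rw [Complex.conj_eq_iff_re.mp hreal, ← mul_assoc, mul_comm c, hcc, one_mul]

lemma exists_eq_mul_ofReal_of_eq_mul_conj {ι : Type*} {ρ : ι → ℂ} {ζ : ℂ}
    (hζ : Complex.normSq ζ = 1) (hρ : ∀ I, ρ I = ζ * conj (ρ I)) :
    ∃ (c : ℂ) (x : ι → ℝ), ∀ I, ρ I = c * (x I : ℂ) := by
  obtain ⟨c, rfl⟩ := IsAlgClosed.exists_pow_nat_eq ζ two_pos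
  have hc : Complex.normSq c = 1 := by
    rwa [map_pow, pow_eq_one_iff_of_nonneg (Complex.normSq_nonneg c) two_ne_zero] at hζ
  choose x hx using fun I => exists_real_eq_mul_of_eq_sq_mul_conj hc (hρ I)
  exact ⟨c, x, hx⟩

end

/-- Toy model, Proposition 1 (xoneifreal): for nonzero `ρ`, `ξ(ρ) = 1` iff
`ρ_I = ζ(ρ)·conj(ρ_I)` for every `I`, iff `ρ` is a complex multiple of a real vector. -/
theorem statement1 {N : ℕ} (ρ : Fin N → ℂ) (hρ : ρ ≠ 0) :
    ((xi ρ = 1 ↔ ∀ I, ρ I = zeta ρ * (starRingEnd ℂ) (ρ I)) ∧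
     (xi ρ = 1 ↔ ∃ (c : ℂ) (x : Fin N → ℝ), ∀ I, ρ I = c * (x I : ℂ))) := by
  refine ⟨xi_eq_one_iff_forall_eq_zeta_mul_conj hρ, fun hxi => ?_, ?_⟩
  · exact exists_eq_mul_ofReal_of_eq_mul_conj hxi
      ((xi_eq_one_iff_forall_eq_zeta_mul_conj hρ).mp hxi)
  · rintro ⟨c, x, hcx⟩
    obtain rfl : ρ = c • fun I => (x I : ℂ) := funext hcx
    have hc : c ≠ 0 := by rintro rfl; simp at hρ
    have hx : x ≠ 0 := by rintro rfl; exact hρ (funext fun I => by simp)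
    rw [xi_smul hc, xi_ofReal hx]

end PureSpinorToy
end
end

section
/- Let N : ℕ, f : ℝ → ℂ, and ρ : Fin N → ℂ with ρ ≠ 0, ξ(ρ) < 1 and f(ξ(ρ)) ≠ 0. Set λ := P_f(ρ) and s := √(1 − ξ(ρ)). Then the projection can be inverted: for every index I, ρ_I = ((1 + s)/(2·f(ξ(ρ))·s))·λ_I + (ζ(ρ)/(2·conj(f(ξ(ρ)))·s))·conj(λ_I). (Toy-model form of the inverse reparametrization formula (Proj-inv): every vector is a linear combination of its projection and the conjugate of its projection.) -/
noncomputable section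

open scoped BigOperators

namespace PureSpinorToy

variable {N : ℕ}

/- In the combination the coefficient of `x̄` cancels, and that of `x` is
`((1+s)² - |z|²)/(2s(1+s)) = 1` because `s² = 1 - |z|²`. -/
theorem eq_inv_proj_scalar {z c x : ℂ} {s : ℝ} (hs : 0 < s)
    (hsz : s ^ 2 = 1 - Complex.normSq z) (hc : c ≠ 0) :
    x = (1 + s) / (2 * c * s) * (c * (x - z / (1 + s) * starRingEnd ℂ x))
      + z / (2 * starRingEnd ℂ c * s) * starRingEnd ℂ (c * (x - z / (1 + s) * starRingEnd ℂ x)) := by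
  have hs' : (s : ℂ) ≠ 0 := by exact_mod_cast hs.ne'
  have hs1 : (1 + s : ℂ) ≠ 0 := by exact_mod_cast (by linarith : (1 + s : ℝ) ≠ 0)
  have hc' : starRingEnd ℂ c ≠ 0 := (map_ne_zero _).mpr hc
  have hszC : (s : ℂ) ^ 2 = 1 - starRingEnd ℂ z * z := by
    rw [← Complex.normSq_eq_conj_mul_self]; exact_mod_cast hsz
  simp only [map_mul, map_sub, map_div₀, map_add, map_one, Complex.conj_conj, Complex.conj_ofReal]
  field_simp
  linear_combination x * hszC

theorem statement7_general {N : ℕ} (f : ℝ → ℂ) (ρ : Fin N → ℂ)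
    (hξ : xi ρ < 1) (hf : f (xi ρ) ≠ 0) :
    ∀ I, ρ I
      = ((1 + (Real.sqrt (1 - xi ρ) : ℂ)) / (2 * f (xi ρ) * (Real.sqrt (1 - xi ρ) : ℂ)))
          * P f ρ I
        + (zeta ρ / (2 * (starRingEnd ℂ) (f (xi ρ)) * (Real.sqrt (1 - xi ρ) : ℂ)))
          * (starRingEnd ℂ) (P f ρ I) := by
  intro I
  have hs : 0 < Real.sqrt (1 - xi ρ) := Real.sqrt_pos.mpr (by linarith)
  have hsz : Real.sqrt (1 - xi ρ) ^ 2 = 1 - Complex.normSq (zeta ρ) :=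
    Real.sq_sqrt (by linarith)
  exact eq_inv_proj_scalar hs hsz hf

/-- Toy model, inverse reparametrization (Proj-inv): every vector is the stated linear
combination of its projection `λ := P_f(ρ)` and the conjugate of its projection. -/
theorem statement7 {N : ℕ} (f : ℝ → ℂ) (ρ : Fin N → ℂ) (hρ : ρ ≠ 0)
    (hξ : xi ρ < 1) (hf : f (xi ρ) ≠ 0) :
    ∀ I, ρ I
      = ((1 + (Real.sqrt (1 - xi ρ) : ℂ)) / (2 * f (xi ρ) * (Real.sqrt (1 - xi ρ) : ℂ)))
          * P f ρ I
        + (zeta ρ / (2 * (starRingEnd ℂ) (f (xi ρ)) * (Real.sqrt (1 - xi ρ) : ℂ)))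
          * (starRingEnd ℂ) (P f ρ I) :=
  statement7_general f ρ hξ hf

end PureSpinorToy
end
end

section
/- Let N : ℕ and ρ : Fin N → ℂ with ρ ≠ 0 and ξ(ρ) < 1. With the special choice f = h, the inverse transformation takes the simple form: setting λ := P_h(ρ), one has ρ_I = λ_I + (ζ(ρ)/(1 + √(1 − ξ(ρ))))·conj(λ_I) for every index I. (Toy-model form of the Hermitian-case inverse formula (hermInverse)/(Proj-inv-alt-h).) -/
noncomputable section

open scoped BigOperators

namespace PureSpinorToy

variable {N : ℕ}

/-! Put `s := √(1 - ξ)` and `c := ζ / (1 + s)`. Composing `z ↦ z - c z̄` with `w ↦ w + c w̄` is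
multiplication by `1 - |c|² = 2s / (1 + s)`, since `|ζ|² = 1 - s²`; the real factor
`h(ξ) = (1 + s) / (2s)` is exactly the inverse of that number. -/

section

open Complex ComplexConjugate

theorem sub_mul_conj_add_mul_conj (a : ℝ) (c z : ℂ) :
    a * (z - c * conj z) + c * conj (a * (z - c * conj z)) = (a * (1 - normSq c) : ℝ) * z := by
  simp only [map_mul, map_sub, conj_ofReal, conj_conj]
  push_cast
  rw [← mul_conj c]
  ring

theorem one_sub_normSq_div_one_add_sqrt (c : ℂ) (hc : normSq c ≤ 1) :
    1 - normSq (c / (1 + (√(1 - normSq c) : ℂ))) = 2 * √(1 - normSq c) / (1 + √(1 - normSq c)) := by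
  set s := √(1 - normSq c)
  have hs_nonneg : 0 ≤ s := Real.sqrt_nonneg _
  have hs_sq : s ^ 2 = 1 - normSq c := Real.sq_sqrt (by linarith)
  rw [← ofReal_one, ← ofReal_add, normSq_div, normSq_ofReal]
  field_simp
  linear_combination -hs_sq

end

theorem statement8_general {N : ℕ} (ρ : Fin N → ℂ) (hξ : xi ρ < 1) :
    ∀ I, ρ I
      = P h ρ I
        + (zeta ρ / (1 + (Real.sqrt (1 - xi ρ) : ℂ))) * (starRingEnd ℂ) (P h ρ I) := by
  intro I
  set s := √(1 - xi ρ)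
  have hs_pos : 0 < s := Real.sqrt_pos.mpr (by linarith)
  have hP : P h ρ I = ((1 + s) / (2 * s) : ℝ)
      * (ρ I - zeta ρ / (1 + (s : ℂ)) * (starRingEnd ℂ) (ρ I)) := rfl
  have hnormSq : 1 - Complex.normSq (zeta ρ / (1 + (s : ℂ))) = 2 * s / (1 + s) :=
    one_sub_normSq_div_one_add_sqrt (zeta ρ) hξ.le
  have hcancel : (1 + s) / (2 * s) * (2 * s / (1 + s)) = 1 := by field_simp
  rw [hP, sub_mul_conj_add_mul_conj, hnormSq, hcancel, Complex.ofReal_one, one_mul]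

/-- Toy model, Hermitian-case inverse formula (hermInverse)/(Proj-inv-alt-h):
with `f = h`, `ρ = λ + (ζ(ρ)/(1+√(1−ξ(ρ))))·λ̄` where `λ := P_h(ρ)`. -/
theorem statement8 {N : ℕ} (ρ : Fin N → ℂ) (hρ : ρ ≠ 0) (hξ : xi ρ < 1) :
    ∀ I, ρ I
      = P h ρ I
        + (zeta ρ / (1 + (Real.sqrt (1 - xi ρ) : ℂ))) * (starRingEnd ℂ) (P h ρ I) :=
  statement8_general ρ hξ

end PureSpinorToy
end
end

section
/- Let N : ℕ and let χ : Fin N → ℂ be a null reference vector (B(χ,χ) = 0). For ρ : Fin N → ℂ with B(ρ,χ) ≠ 0 define Q(ρ) := ρ − (B(ρ,ρ)/(2·B(ρ,χ))) • χ. Then: (i) B(Q(ρ), Q(ρ)) = 0 for every such ρ; (ii) Q(λ) = λ for every null λ with B(λ,χ) ≠ 0; (iii) for every null λ with B(λ,χ) ≠ 0, Q is Fréchet differentiable over ℂ (holomorphic) at λ with derivative the ℂ-linear map K : v ↦ v − (B(λ,v)/B(λ,χ)) • χ, and K is idempotent: K ∘ K = K. (Toy-model form of the non-covariant reference-spinor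 projection (non-cov-integrated)/(toy:PchiWithpurechi) and of the Oda–Tonin projector.) -/
noncomputable section

open scoped BigOperators

namespace PureSpinorToy

variable {N : ℕ}

/-- The non-covariant projection with a null reference vector `χ`:
`Q(ρ) := ρ − (B(ρ,ρ)/(2·B(ρ,χ))) • χ`. -/
def Q (χ ρ : Fin N → ℂ) : Fin N → ℂ := ρ - (B ρ ρ / (2 * B ρ χ)) • χ

/-!
Write `Q χ ρ = ρ - c • χ`. As `χ` is null, `B(ρ - c χ, ρ - c χ) = B(ρ,ρ) - 2 c B(ρ,χ)` is affine
in `c`, and `c = B(ρ,ρ) / (2 B(ρ,χ))` is its zero. At a null point `λ` the quotient rule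
kills the derivative of the denominator, so `c` has derivative `B(λ,·) / B(λ,χ)` and `Q` has
derivative `v ↦ v - (B(λ,v) / B(λ,χ)) χ`: the projection onto `ker B(λ,·)` along `χ`, which
is idempotent.
-/

section NullProjection

variable {𝕜 E : Type*} [NontriviallyNormedField 𝕜] [NormedAddCommGroup E] [NormedSpace 𝕜 E]

def projKerAlong (f : E →L[𝕜] 𝕜) (χ : E) : E →L[𝕜] E :=
  .id 𝕜 E - (f χ)⁻¹ • f.smulRight χ

lemma projKerAlong_apply (f : E →L[𝕜] 𝕜) (χ v : E) :
    projKerAlong f χ v = v - (f v / f χ) • χ := by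
  simp [projKerAlong, smul_smul, div_eq_inv_mul]

lemma apply_projKerAlong {f : E →L[𝕜] 𝕜} {χ : E} (hχ : f χ ≠ 0) (v : E) :
    f (projKerAlong f χ v) = 0 := by
  rw [projKerAlong_apply, map_sub, map_smul, smul_eq_mul, div_mul_cancel₀ _ hχ, sub_self]

lemma isIdempotentElem_projKerAlong {f : E →L[𝕜] 𝕜} {χ : E} (hχ : f χ ≠ 0) :
    IsIdempotentElem (projKerAlong f χ) := by
  ext v
  rw [mul_apply_eq_comp, projKerAlong_apply _ _ (projKerAlong f χ v), apply_projKerAlong hχ,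
    zero_div, zero_smul, sub_zero]

def nullProj (b : E →L[𝕜] E →L[𝕜] 𝕜) (χ ρ : E) : E := ρ - (b ρ ρ / (2 * b ρ χ)) • χ

variable {b : E →L[𝕜] E →L[𝕜] 𝕜}

lemma nullProj_eq_self {χ lam : E} (hlam : b lam lam = 0) : nullProj b χ lam = lam := by
  simp [nullProj, hlam]

lemma hasFDerivAt_apply_self (hb : ∀ x y, b x y = b y x) (x : E) :
    HasFDerivAt (fun ρ => b ρ ρ) ((2 : 𝕜) • b x) x := by
  refine (b.hasFDerivAt_of_bilinear (hasFDerivAt_id x) (hasFDerivAt_id x)).congr_fderiv ?_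
  ext v
  simp [hb v x, two_mul]

variable [NeZero (2 : 𝕜)]

lemma apply_nullProj_nullProj (hb : ∀ x y, b x y = b y x) {χ ρ : E} (hχ : b χ χ = 0)
    (hρχ : b ρ χ ≠ 0) : b (nullProj b χ ρ) (nullProj b χ ρ) = 0 := by
  have expand : ∀ c : 𝕜, b (ρ - c • χ) (ρ - c • χ) = b ρ ρ - 2 * c * b ρ χ := by
    intro c
    simp only [map_sub, map_smul, sub_apply, smul_apply, smul_eq_mul, hχ, hb χ ρ]
    ring
  rw [nullProj, expand]
  field_simp
  ring

lemma hasFDerivAt_nullProj (hb : ∀ x y, b x y = b y x) {χ lam : E} (hlam : b lam lam = 0)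
    (hlamχ : b lam χ ≠ 0) : HasFDerivAt (nullProj b χ) (projKerAlong (b lam) χ) lam := by
  have hden : HasFDerivAt (fun ρ => (2 * b ρ χ)⁻¹) (fderiv 𝕜 (fun ρ => (2 * b ρ χ)⁻¹) lam) lam :=
    ((by fun_prop : DifferentiableAt 𝕜 (fun ρ => 2 * b ρ χ) lam).inv
      (mul_ne_zero two_ne_zero hlamχ)).hasFDerivAt
  -- the derivative of the denominator is multiplied by `b lam lam = 0`
  have hcoef : HasFDerivAt (fun ρ => b ρ ρ / (2 * b ρ χ)) ((b lam χ)⁻¹ • b lam) lam := by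
    simp only [div_eq_mul_inv]
    refine ((hasFDerivAt_apply_self hb lam).fun_mul hden).congr_fderiv ?_
    ext v
    simp only [hlam, mul_inv_rev, add_apply, smul_apply, smul_eq_mul, zero_mul, zero_add]
    field_simp
  refine ((hasFDerivAt_id lam).sub (hcoef.smul_const χ)).congr_fderiv ?_
  ext v
  simp [projKerAlong_apply, div_eq_inv_mul]

end NullProjection

-- `Bc ρ σ` unfolds to `B ρ σ`, so the lemmas on `nullProj Bc` apply verbatim to `Q`.
def Bc : (Fin N → ℂ) →L[ℂ] (Fin N → ℂ) →L[ℂ] ℂ :=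
  (dotProductBilin ℂ ℂ).toContinuousBilinearMap

lemma Bc_comm (ρ σ : Fin N → ℂ) : Bc ρ σ = Bc σ ρ :=
  dotProduct_comm ρ σ

lemma Q_eq_nullProj (χ : Fin N → ℂ) : Q χ = nullProj Bc χ := rfl

/-- Toy model form of the reference-spinor projection (non-cov-integrated)/
(toy:PchiWithpurechi) and the Oda–Tonin projector: `Q` maps onto the null quadric,
restricts to the identity on it, and is holomorphic at null points with idempotent
derivative `K : v ↦ v − (B(λ,v)/B(λ,χ)) • χ`. -/
theorem statement17 {N : ℕ} (χ : Fin N → ℂ) (hχ : B χ χ = 0) :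
    (∀ ρ : Fin N → ℂ, B ρ χ ≠ 0 → B (Q χ ρ) (Q χ ρ) = 0) ∧
    (∀ lam : Fin N → ℂ, B lam lam = 0 → B lam χ ≠ 0 → Q χ lam = lam) ∧
    (∀ lam : Fin N → ℂ, B lam lam = 0 → B lam χ ≠ 0 →
      ∃ K : (Fin N → ℂ) →L[ℂ] (Fin N → ℂ), HasFDerivAt (Q χ) K lam ∧
        (∀ v, K v = v - (B lam v / B lam χ) • χ) ∧
        ∀ v, K (K v) = K v) := by
  rw [Q_eq_nullProj]
  refine ⟨fun ρ hρχ => apply_nullProj_nullProj Bc_comm hχ hρχ,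
    fun lam hlam _ => nullProj_eq_self hlam,
    fun lam hlam hlamχ => ⟨projKerAlong (Bc lam) χ, hasFDerivAt_nullProj Bc_comm hlam hlamχ,
      projKerAlong_apply (Bc lam) χ,
      fun v => congrArg (· v) (isIdempotentElem_projKerAlong (f := Bc lam) hlamχ)⟩⟩

end PureSpinorToy
end
end

section
/- Let 0 < b ≤ 1 and let f : ℝ → ℂ satisfy f(0) = 1 and, for every t ∈ [0, b), f is differentiable at t with derivative f′(t) = f(t)/(2·(1−t)·(1+√(1−t))). Then f(t) = (1+√(1−t))/(2·√(1−t)) for all t ∈ [0, b). (The ODE characterization of the function h arising in the Hermiticity proof of Proposition 3: h is the unique solution with f(0) = 1 of the differential equation f′/f = 1/(2(1−ξ)(1+√(1−ξ))).) -/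
noncomputable section

open scoped BigOperators

namespace PureSpinorToy

variable {N : ℕ}

/-! Any solution `f` and `h` itself solve the same linear equation `y′ = a·y`, with
`a t = 1/(2(1-t)(1+√(1-t)))`: indeed `h′ t = 1/(4(1-t)^{3/2}) = a t · h t`. As `h` does not vanish,
`(f / h)′ = 0`, so `f / h` keeps its initial value `f 0 / h 0 = 1`.
-/

section LinearODE

variable {𝕜 : Type*} [NontriviallyNormedField 𝕜] [NormedAlgebra ℝ 𝕜]

theorem eqOn_Ico_of_hasDerivAt_mul {f g a : ℝ → 𝕜} {x₀ b : ℝ}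
    (hf : ∀ t ∈ Set.Ico x₀ b, HasDerivAt f (f t * a t) t)
    (hg : ∀ t ∈ Set.Ico x₀ b, HasDerivAt g (g t * a t) t)
    (hg_ne : ∀ t ∈ Set.Ico x₀ b, g t ≠ 0) (hfg : f x₀ = g x₀) :
    Set.EqOn f g (Set.Ico x₀ b) := by
  have hquot : ∀ t ∈ Set.Ico x₀ b, HasDerivAt (f / g) 0 t := by
    intro t ht
    convert (hf t ht).div (hg t ht) (hg_ne t ht) using 1
    ring
  intro t ht
  have hconst := constant_of_has_deriv_right_zero (a := x₀) (b := t)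
    (fun s hs => (hquot s ⟨hs.1, hs.2.trans_lt ht.2⟩).continuousAt.continuousWithinAt)
    (fun s hs => (hquot s ⟨hs.1, hs.2.trans ht.2⟩).hasDerivWithinAt) t ⟨ht.1, le_rfl⟩
  have hg₀ : g x₀ ≠ 0 := hg_ne x₀ ⟨le_rfl, ht.1.trans_lt ht.2⟩
  rwa [Pi.div_apply, Pi.div_apply, hfg, div_self hg₀, div_eq_one_iff_eq (hg_ne t ht)] at hconst

end LinearODE

theorem hasDerivAt_sqrt_one_sub {t : ℝ} (ht : t < 1) :
    HasDerivAt (fun s => √(1 - s)) (-1 / (2 * √(1 - t))) t := by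
  simpa using ((hasDerivAt_id t).const_sub 1).sqrt (sub_pos.mpr ht).ne'

theorem hasDerivAt_h_real {t : ℝ} (ht : t < 1) :
    HasDerivAt (fun s => (1 + √(1 - s)) / (2 * √(1 - s))) (1 / (4 * √(1 - t) ^ 3)) t := by
  have hs : 0 < √(1 - t) := Real.sqrt_pos.mpr (sub_pos.mpr ht)
  have hd := hasDerivAt_sqrt_one_sub ht
  refine ((hd.const_add 1).fun_div (hd.const_mul 2) (by positivity)).congr_deriv ?_
  field_simp
  ring

theorem hasDerivAt_h {t : ℝ} (ht : t < 1) :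
    HasDerivAt h (h t * (2 * ((1 - t : ℝ) : ℂ) * (1 + (√(1 - t) : ℂ)))⁻¹) t := by
  have hs : 0 < √(1 - t) := Real.sqrt_pos.mpr (sub_pos.mpr ht)
  have hsq : √(1 - t) ^ 2 = 1 - t := Real.sq_sqrt (sub_pos.mpr ht).le
  refine (hasDerivAt_h_real ht).ofReal_comp.congr_deriv ?_
  have : 1 / (4 * √(1 - t) ^ 3) =
      (1 + √(1 - t)) / (2 * √(1 - t)) * (2 * (1 - t) * (1 + √(1 - t)))⁻¹ := by
    have key : ∀ s : ℝ, 0 < s → 1 / (4 * s ^ 3) = (1 + s) / (2 * s) * (2 * s ^ 2 * (1 + s))⁻¹ := by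
      intro s hs
      field_simp
      ring
    rw [key _ hs, hsq]
  rw [this, h]
  push_cast
  ring

theorem h_zero : h 0 = 1 := by
  norm_num [h]

theorem h_ne_zero {t : ℝ} (ht : t < 1) : h t ≠ 0 := by
  have hs : 0 < √(1 - t) := Real.sqrt_pos.mpr (sub_pos.mpr ht)
  unfold h
  exact_mod_cast (by positivity : (0 : ℝ) < (1 + √(1 - t)) / (2 * √(1 - t))).ne'

theorem statement18_general (b : ℝ) (hb1 : b ≤ 1) (f : ℝ → ℂ)
    (hf0 : f 0 = 1)
    (hf' : ∀ t ∈ Set.Ico (0 : ℝ) b,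
      HasDerivAt f (f t / (2 * ((1 - t : ℝ) : ℂ) * (1 + (Real.sqrt (1 - t) : ℂ)))) t) :
    ∀ t ∈ Set.Ico (0 : ℝ) b,
      f t = (((1 + Real.sqrt (1 - t)) / (2 * Real.sqrt (1 - t)) : ℝ) : ℂ) := by
  have hlt : ∀ t ∈ Set.Ico (0 : ℝ) b, t < 1 := fun t ht => ht.2.trans_le hb1
  exact eqOn_Ico_of_hasDerivAt_mul (fun t ht => by simpa only [div_eq_mul_inv] using hf' t ht)
    (fun t ht => hasDerivAt_h (hlt t ht)) (fun t ht => h_ne_zero (hlt t ht)) (hf0.trans h_zero.symm)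

/-- ODE characterization of `h`: the unique solution with `f(0) = 1` of
`f′(t) = f(t)/(2(1−t)(1+√(1−t)))` on `[0,b)` is `f(t) = (1+√(1−t))/(2√(1−t))`. -/
theorem statement18 (b : ℝ) (hb0 : 0 < b) (hb1 : b ≤ 1) (f : ℝ → ℂ)
    (hf0 : f 0 = 1)
    (hf' : ∀ t ∈ Set.Ico (0 : ℝ) b,
      HasDerivAt f (f t / (2 * ((1 - t : ℝ) : ℂ) * (1 + (Real.sqrt (1 - t) : ℂ)))) t) :
    ∀ t ∈ Set.Ico (0 : ℝ) b,
      f t = (((1 + Real.sqrt (1 - t)) / (2 * Real.sqrt (1 - t)) : ℝ) : ℂ) :=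
  statement18_general b hb1 f hf0 hf'

end PureSpinorToy
end
end
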